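/- The interchange law holds for probabilistic bundle event structures modulo probabilistic simulation: for pBES (ℰ,π), (ℱ,ρ), (ℰ',π'), (ℱ',ρ') whose underlying BES are regular and pairwise disjoint, ((ℰ,π) ‖ (ℱ,ρ)) · ((ℰ',π') ‖ (ℱ',ρ')) ⊑ ((ℰ,π) · (ℰ',π')) ‖ ((ℱ,ρ) · (ℱ',ρ')), i.e. there exists a probabilistic simulation from the left-hand pBES to the right-hand pBES. -/

import Mathlib

open Classical

namespace PCKA

/-- A bundle event structure over event universe `Ev` and alphabet `A`:
a set of events, a conflict relation, a bundle relation, a partial labelling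
(modelled via `Option`) and a set of final events. -/
structure BES (Ev A : Type) where
  E : Set Ev
  conflict : Ev → Ev → Prop
  bundle : Set Ev → Ev → Prop
  lab : Ev → Option A
  final : Set Ev

variable {Ev A : Type}

/-- Well-formedness of a bundle event structure. -/
def IsBES (ℰ : BES Ev A) : Prop :=
  (∀ e, ¬ ℰ.conflict e e) ∧
  (∀ e e', ℰ.conflict e e' → ℰ.conflict e' e) ∧
  (∀ e e', ℰ.conflict e e' → e ∈ ℰ.E ∧ e' ∈ ℰ.E) ∧
  (∀ x e, ℰ.bundle x e → e ∈ ℰ.E ∧ x ⊆ ℰ.E ∧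
    ∀ a ∈ x, ∀ b ∈ x, a ≠ b → ℰ.conflict a b) ∧
  (∀ e, ℰ.lab e ≠ none → e ∈ ℰ.E) ∧
  ℰ.final ⊆ ℰ.E ∧
  (∀ a ∈ ℰ.final, ∀ b ∈ ℰ.final, a ≠ b → ℰ.conflict a b)

/-- `α` is an event trace of `ℰ`: every event is enabled by each of its bundles
and is distinct from and conflict-free with all earlier events. -/
def IsTrace (ℰ : BES Ev A) (α : List Ev) : Prop :=
  ∀ l e r, α = l ++ e :: r →
    e ∈ ℰ.E ∧
    (∀ x, ℰ.bundle x e → ∃ e' ∈ l, e' ∈ x) ∧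
    (∀ e' ∈ l, e ≠ e' ∧ ¬ ℰ.conflict e e')

/-- A configuration is the set of events of some event trace (a linearisation). -/
def IsConfig (ℰ : BES Ev A) (x : Set Ev) : Prop :=
  ∃ α : List Ev, IsTrace ℰ α ∧ {e | e ∈ α} = x

/-- Adjacent occurrences in a list. -/
def traceAdj (α : List Ev) (a b : Ev) : Prop := ∃ l r, α = l ++ a :: b :: r

/-- The order `≼_α` induced by an event trace: reflexive transitive closure of
adjacency in the trace. -/
def traceOrder (α : List Ev) : Ev → Ev → Prop := Relation.ReflTransGen (traceAdj α)

/-- The causal order `≼_x` of a configuration: the intersection of the orders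
of all its linearisations. -/
def configOrder (ℰ : BES Ev A) (x : Set Ev) (a b : Ev) : Prop :=
  ∀ α, IsTrace ℰ α → {e | e ∈ α} = x → traceOrder α a b

/-- The labelling restricted to a set of events. -/
noncomputable def labOn (ℰ : BES Ev A) (x : Set Ev) : Ev → Option A :=
  fun e => if e ∈ x then ℰ.lab e else none

/-- `(x, o, l)` is the lposet of the configuration `x` of `ℰ`. -/
def IsLposetOf (ℰ : BES Ev A) (x : Set Ev) (o : Ev → Ev → Prop)
    (l : Ev → Option A) : Prop :=
  IsConfig ℰ x ∧
  (∀ a b, o a b ↔ (a ∈ x ∧ b ∈ x ∧ configOrder ℰ x a b)) ∧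
  l = labOn ℰ x

/-- The lposet `(x,ox,lx)` is a prefix of the lposet `(y,oy,ly)`. -/
def LposetPrefix (x : Set Ev) (ox : Ev → Ev → Prop) (lx : Ev → Option A)
    (y : Set Ev) (oy : Ev → Ev → Prop) (ly : Ev → Option A) : Prop :=
  x ⊆ y ∧
  (∀ e ∈ x, ly e = lx e) ∧
  (∀ e e', oy e e' → e' ∈ x → e ∈ x ∧ ox e e')

/-- Restriction of a list to the elements of a set (the subsequence `α|_x`). -/
noncomputable def listRestrict (α : List Ev) (x : Set Ev) : List Ev :=
  α.filter (fun e => decide (e ∈ x))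

/-- The sub-BES order `ℰ ⊑ ℱ`. -/
def SubBES (ℰ ℱ : BES Ev A) : Prop :=
  ℰ.E ⊆ ℱ.E ∧
  (∀ e e', ℰ.conflict e e' ↔ (ℱ.conflict e e' ∧ e ∈ ℰ.E ∧ e' ∈ ℰ.E)) ∧
  (∀ x e, ℰ.bundle x e → ℱ.bundle x e) ∧
  (∀ x e, ℱ.bundle x e → e ∈ ℰ.E → x ⊆ ℰ.E ∧ ℰ.bundle x e) ∧
  (∀ e ∈ ℰ.E, ℰ.lab e = ℱ.lab e) ∧
  (∀ e, e ∈ ℰ.final ↔ (e ∈ ℱ.final ∧ e ∈ ℰ.E))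

/-- `ℰ` is the componentwise union of the chain `c`. -/
def IsChainUnion (c : ℕ → BES Ev A) (ℰ : BES Ev A) : Prop :=
  ℰ.E = (⋃ i, (c i).E) ∧
  (∀ e e', ℰ.conflict e e' ↔ ∃ i, (c i).conflict e e') ∧
  (∀ x e, ℰ.bundle x e ↔ ∃ i, (c i).bundle x e) ∧
  (∀ i, ∀ e ∈ (c i).E, ℰ.lab e = (c i).lab e) ∧
  (∀ e, e ∉ (⋃ i, (c i).E) → ℰ.lab e = none) ∧
  ℰ.final = (⋃ i, (c i).final)

/-- Immediate conflict. -/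
def ImmConflict (ℰ : BES Ev A) (e e' : Ev) : Prop :=
  ℰ.conflict e e' ∧
  ∃ x, IsConfig ℰ x ∧ IsConfig ℰ (x ∪ {e}) ∧ IsConfig ℰ (x ∪ {e'})

/-- A partial cluster: pairwise immediately conflicting, equally pointed events. -/
def PartialCluster (ℰ : BES Ev A) (K : Set Ev) : Prop :=
  K ⊆ ℰ.E ∧
  (∀ e ∈ K, ∀ e' ∈ K, e ≠ e' → ImmConflict ℰ e e') ∧
  (∀ e ∈ K, ∀ e' ∈ K, ∀ x, ℰ.bundle x e → ℰ.bundle x e')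

/-- A cluster is a maximal partial cluster. -/
def Cluster (ℰ : BES Ev A) (K : Set Ev) : Prop :=
  PartialCluster ℰ K ∧ ∀ H, PartialCluster ℰ H → K ⊆ H → H = K

/-- `⟨e⟩`: the intersection of all clusters containing `e`. -/
def cell (ℰ : BES Ev A) (e : Ev) : Set Ev :=
  ⋂₀ {K | Cluster ℰ K ∧ e ∈ K}

/-- `cfl x`: events in conflict with some event of `x`. -/
def cfl (ℰ : BES Ev A) (x : Set Ev) : Set Ev :=
  {e | e ∈ ℰ.E ∧ ∃ e' ∈ x, ℰ.conflict e e'}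

/-- Confusion freeness. -/
def ConfusionFree (ℰ : BES Ev A) : Prop :=
  (∀ e e', ImmConflict ℰ e e' → e ∈ cell ℰ e') ∧
  (∀ x e, IsConfig ℰ x → cell ℰ e ∩ x = ∅ → IsConfig ℰ (x ∪ {e}) →
    ∀ e'' ∈ cell ℰ e, IsConfig ℰ (x ∪ {e''}))

/-- Initial events: those pointed by no bundle. -/
def bInit (ℰ : BES Ev A) : Set Ev :=
  {e | e ∈ ℰ.E ∧ ∀ x, ¬ ℰ.bundle x e}

/-- Nondeterministic choice `ℰ + ℱ` (for disjoint BES). -/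
def bchoice (ℰ ℱ : BES Ev A) : BES Ev A where
  E := ℰ.E ∪ ℱ.E
  conflict := fun e e' => ℰ.conflict e e' ∨ ℱ.conflict e e' ∨
    (e ∈ bInit ℰ ∧ e' ∈ bInit ℱ) ∨ (e ∈ bInit ℱ ∧ e' ∈ bInit ℰ) ∨
    (e ∈ ℰ.final ∧ e' ∈ ℱ.final) ∨ (e ∈ ℱ.final ∧ e' ∈ ℰ.final)
  bundle := fun x e => ℰ.bundle x e ∨ ℱ.bundle x e
  lab := fun e => (ℰ.lab e).orElse (fun _ => ℱ.lab e)
  final := ℰ.final ∪ ℱ.final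

/-- Sequential composition `ℰ · ℱ` (for disjoint BES). -/
def bseq (ℰ ℱ : BES Ev A) : BES Ev A where
  E := ℰ.E ∪ ℱ.E
  conflict := fun e e' => ℰ.conflict e e' ∨ ℱ.conflict e e'
  bundle := fun x e => ℰ.bundle x e ∨ ℱ.bundle x e ∨ (x = ℰ.final ∧ e ∈ bInit ℱ)
  lab := fun e => (ℰ.lab e).orElse (fun _ => ℱ.lab e)
  final := ℱ.final

/-- Concurrent composition `ℰ ‖ ℱ` with fresh delimiter events `d₁, d₂`. -/
def bpar (ℰ ℱ : BES Ev A) (d₁ d₂ : Ev) : BES Ev A where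
  E := ℰ.E ∪ ℱ.E ∪ {d₁, d₂}
  conflict := fun e e' => ℰ.conflict e e' ∨ ℱ.conflict e e'
  bundle := fun x e => ℰ.bundle x e ∨ ℱ.bundle x e ∨
    (x = {d₁} ∧ (e ∈ bInit ℰ ∨ e ∈ bInit ℱ)) ∨
    (x = ℰ.final ∧ e = d₂) ∨ (x = ℱ.final ∧ e = d₂)
  lab := fun e => (ℰ.lab e).orElse (fun _ => ℱ.lab e)
  final := {d₂}

/-- Renaming of a BES along a map of events. -/
noncomputable def brename (g : Ev → Ev) (ℰ : BES Ev A) : BES Ev A where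
  E := g '' ℰ.E
  conflict := fun e e' => ∃ a b, ℰ.conflict a b ∧ e = g a ∧ e' = g b
  bundle := fun x e => ∃ y a, ℰ.bundle y a ∧ x = g '' y ∧ e = g a
  lab := fun e => if h : ∃ a, a ∈ ℰ.E ∧ g a = e then ℰ.lab h.choose else none
  final := g '' ℰ.final

/-- `ℰ'` is a (fresh) copy of `ℰ`. -/
def IsCopy (ℰ' ℰ : BES Ev A) : Prop :=
  ∃ g : Ev → Ev, Set.InjOn g ℰ.E ∧ ℰ' = brename g ℰ

/-- `𝒮` is the binary Kleene product `ℰ * ℱ`: the componentwise union of the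
chain `ℱ ⊑ ℱ + ℰ·ℱ ⊑ ⋯` built with fresh disjoint copies at each stage. -/
def IsStarOf (ℰ ℱ 𝒮 : BES Ev A) : Prop :=
  ∃ c : ℕ → BES Ev A,
    IsCopy (c 0) ℱ ∧
    (∀ i, ∃ ℰ' ℱ' : BES Ev A, IsCopy ℰ' ℰ ∧ IsCopy ℱ' ℱ ∧
      ℱ'.E ∩ (ℰ'.E ∪ (c i).E) = ∅ ∧ ℰ'.E ∩ (c i).E = ∅ ∧
      c (i + 1) = bchoice ℱ' (bseq ℰ' (c i)) ∧
      SubBES (c i) (c (i + 1))) ∧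
    IsChainUnion c 𝒮

/-- The basic BES `0` (deadlock). -/
def besZero : BES Ev A :=
  ⟨∅, fun _ _ => False, fun _ _ => False, fun _ => none, ∅⟩

/-- The basic BES `1` (skip), with a single unlabelled final event. -/
def besOne (e : Ev) : BES Ev A :=
  ⟨{e}, fun _ _ => False, fun _ _ => False, fun _ => none, {e}⟩

/-- The basic BES for a one-step action `a`. -/
noncomputable def besAct (e : Ev) (a : A) : BES Ev A :=
  ⟨{e}, fun _ _ => False, fun _ _ => False,
    fun e' => if e' = e then some a else none, {e}⟩

/-- Regular BES: built from the basic BES by `+`, `·`, `‖` and `*`. -/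
inductive Regular : BES Ev A → Prop
  | zero : Regular besZero
  | one (e : Ev) : Regular (besOne e)
  | act (e : Ev) (a : A) : Regular (besAct e a)
  | choice {ℰ ℱ : BES Ev A} : Regular ℰ → Regular ℱ → ℰ.E ∩ ℱ.E = ∅ →
      Regular (bchoice ℰ ℱ)
  | seq {ℰ ℱ : BES Ev A} : Regular ℰ → Regular ℱ → ℰ.E ∩ ℱ.E = ∅ →
      Regular (bseq ℰ ℱ)
  | par {ℰ ℱ : BES Ev A} (d₁ d₂ : Ev) : Regular ℰ → Regular ℱ →
      ℰ.E ∩ ℱ.E = ∅ → d₁ ≠ d₂ → d₁ ∉ ℰ.E ∪ ℱ.E → d₂ ∉ ℰ.E ∪ ℱ.E →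
      Regular (bpar ℰ ℱ d₁ d₂)
  | star {ℰ ℱ 𝒮 : BES Ev A} : Regular ℰ → Regular ℱ → IsStarOf ℰ ℱ 𝒮 →
      Regular 𝒮

/-- A probability distribution on a BES: a discrete distribution on events
whose support is contained in a single cell `⟨e⟩`. -/
def IsDistOn (ℰ : BES Ev A) (p : PMF Ev) : Prop :=
  ∃ e ∈ ℰ.E, p.support ⊆ cell ℰ e

/-- A probabilistic bundle event structure: a BES with a set of distributions. -/
structure PBES (Ev A : Type) where
  bes : BES Ev A
  dists : Set (PMF Ev)

/-- Well-formedness of a probabilistic BES. -/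
def IsPBES (P : PBES Ev A) : Prop :=
  IsBES P.bes ∧ ConfusionFree P.bes ∧
  (∀ p ∈ P.dists, IsDistOn P.bes p) ∧
  (∀ e ∈ P.bes.E, ∃ p ∈ P.dists, e ∈ p.support)

/-- No bundle set contains a final event. -/
def NoFinalBundle (ℰ : BES Ev A) : Prop :=
  ∀ x e, ℰ.bundle x e → x ∩ ℰ.final = ∅

/-- Probabilistic prefix: `x ⊑ Δ` iff `Δ = Σ_{e ∈ supp p} p e · δ_{x ∪ {e}}`
for some `p` in the distribution set, with `supp p` disjoint from `x` and all
extensions configurations. -/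
def ProbPrefix (P : PBES Ev A) (x : Set Ev) (Δ : PMF (Set Ev)) : Prop :=
  IsConfig P.bes x ∧
  ∃ p ∈ P.dists, p.support ∩ x = ∅ ∧
    (∀ e ∈ p.support, IsConfig P.bes (x ∪ {e})) ∧
    Δ = p.bind (fun e => PMF.pure (x ∪ {e}))

/-- Lifting of a relation `S ⊆ X × 𝒟(Y)` to `𝒟(X) × 𝒟(Y)`. -/
def Lift {X Y : Type} (S : X → PMF Y → Prop) (Δ : PMF X) (Θ : PMF Y) : Prop :=
  ∃ (ι : Type) (_ : Countable ι) (w : PMF ι) (xs : ι → X) (Θs : ι → PMF Y),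
    Δ = w.bind (fun i => PMF.pure (xs i)) ∧
    (∀ i, w i ≠ 0 → S (xs i) (Θs i)) ∧
    Θ = w.bind Θs

/-- The labelled events of a configuration. -/
def hatSet (ℰ : BES Ev A) (x : Set Ev) : Set Ev :=
  {e | e ∈ x ∧ ℰ.lab e ≠ none}

/-- Implementation (subsumption) `x ⊑_s y` between configurations: a
label-preserving monotonic bijection from the labelled events of `y` to those
of `x`. -/
def Subsum (ℰ : BES Ev A) (x : Set Ev) (ℱ : BES Ev A) (y : Set Ev) : Prop :=
  ∃ f : Ev → Ev, Set.BijOn f (hatSet ℱ y) (hatSet ℰ x) ∧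
    (∀ e ∈ hatSet ℱ y, ℰ.lab (f e) = ℱ.lab e) ∧
    (∀ e e', e ∈ hatSet ℱ y → e' ∈ hatSet ℱ y →
      configOrder ℱ y e e' → configOrder ℰ x (f e) (f e'))

/-- Probabilistic simulation from `P` to `Q`. -/
def IsSimulation (P Q : PBES Ev A) (S : Set Ev → PMF (Set Ev) → Prop) : Prop :=
  S ∅ (PMF.pure ∅) ∧
  (∀ x Θ, S x Θ → IsConfig P.bes x ∧
    ∀ y ∈ Θ.support, IsConfig Q.bes y ∧ Subsum P.bes x Q.bes y) ∧
  (∀ x Θ Δ', S x Θ → ProbPrefix P x Δ' →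
    ∃ Θ', Relation.ReflTransGen (Lift (ProbPrefix Q)) Θ Θ' ∧ Lift S Δ' Θ') ∧
  (∀ x Θ, S x Θ → (x ∩ P.bes.final).Nonempty →
    ∀ y ∈ Θ.support, (y ∩ Q.bes.final).Nonempty)

/-- `P ⊑ Q`: there exists a probabilistic simulation from `P` to `Q`. -/
def Sim (P Q : PBES Ev A) : Prop := ∃ S, IsSimulation P Q S

/-- Nondeterministic choice of pBES. -/
def pch (P Q : PBES Ev A) : PBES Ev A :=
  ⟨bchoice P.bes Q.bes, P.dists ∪ Q.dists⟩

/-- Sequential composition of pBES. -/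
def pseq (P Q : PBES Ev A) : PBES Ev A :=
  ⟨bseq P.bes Q.bes, P.dists ∪ Q.dists⟩

/-- Concurrent composition of pBES with fresh delimiters `d₁, d₂`. -/
noncomputable def ppar (P Q : PBES Ev A) (d₁ d₂ : Ev) : PBES Ev A :=
  ⟨bpar P.bes Q.bes d₁ d₂, P.dists ∪ Q.dists ∪ {PMF.pure d₁, PMF.pure d₂}⟩

/-- The sub-pBES order. -/
def SubPBES (P Q : PBES Ev A) : Prop :=
  SubBES P.bes Q.bes ∧ P.dists = {p | p ∈ Q.dists ∧ p.support ⊆ P.bes.E}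

/-- Renaming of a pBES. -/
noncomputable def prename (g : Ev → Ev) (P : PBES Ev A) : PBES Ev A :=
  ⟨brename g P.bes, (fun p => p.map g) '' P.dists⟩

/-- `P'` is a (fresh) copy of the pBES `P`. -/
def IsPCopy (P' P : PBES Ev A) : Prop :=
  ∃ g : Ev → Ev, Set.InjOn g P.bes.E ∧ P' = prename g P

/-- Componentwise union of a chain of pBES. -/
def IsPChainUnion (c : ℕ → PBES Ev A) (P : PBES Ev A) : Prop :=
  IsChainUnion (fun i => (c i).bes) P.bes ∧ P.dists = ⋃ i, (c i).dists

/-- `S` is the binary Kleene product `P * G` of pBES. -/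
def IsPStarOf (P G S : PBES Ev A) : Prop :=
  ∃ c : ℕ → PBES Ev A,
    IsPCopy (c 0) G ∧
    (∀ i, ∃ P' G' : PBES Ev A, IsPCopy P' P ∧ IsPCopy G' G ∧
      G'.bes.E ∩ (P'.bes.E ∪ (c i).bes.E) = ∅ ∧ P'.bes.E ∩ (c i).bes.E = ∅ ∧
      c (i + 1) = pch G' (pseq P' (c i)) ∧
      SubPBES (c i) (c (i + 1))) ∧
    IsPChainUnion c S

/-! The simulation relates a configuration `x` of `(P ‖ Q) · (P' ‖ Q')` to the point mass at
its image under the partial map that keeps the events of the four components, renames the outer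
delimiters `d₁ ↦ d₅`, `d₄ ↦ d₆` and erases the inner ones `d₂, d₃`. The image of a trace is a
trace of `(P · P') ‖ (Q · Q')`: a bundle of the right-hand side is either a bundle of the
left-hand side, or a sequential bundle `Φ_P ↦ e` with `e` initial in `P'`, which the left-hand
side enforces through the chain `Φ_P ↦ d₂ ↦ d₃ ↦ e`. A probabilistic step of the left-hand side is
matched by the same distribution (delimiters renamed) on the right, or by no step at all when it
performs `d₂` or `d₃`. -/

theorem isTrace_nil (ℰ : BES Ev A) : IsTrace ℰ [] := by
  intro l e r h
  simp at h

theorem isConfig_empty (ℰ : BES Ev A) : IsConfig ℰ ∅ := ⟨[], isTrace_nil ℰ, by simp⟩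

theorem IsBES.mem_of_conflict {ℰ : BES Ev A} (h : IsBES ℰ) {e e' : Ev}
    (hc : ℰ.conflict e e') : e ∈ ℰ.E ∧ e' ∈ ℰ.E :=
  h.2.2.1 e e' hc

theorem IsBES.mem_of_bundle {ℰ : BES Ev A} (h : IsBES ℰ) {x : Set Ev} {e : Ev}
    (hb : ℰ.bundle x e) : e ∈ ℰ.E :=
  (h.2.2.2.1 x e hb).1

theorem IsBES.bundle_subset {ℰ : BES Ev A} (h : IsBES ℰ) {x : Set Ev} {e : Ev}
    (hb : ℰ.bundle x e) : x ⊆ ℰ.E :=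
  (h.2.2.2.1 x e hb).2.1

theorem IsBES.mem_of_lab_ne_none {ℰ : BES Ev A} (h : IsBES ℰ) {e : Ev}
    (hl : ℰ.lab e ≠ none) : e ∈ ℰ.E :=
  h.2.2.2.2.1 e hl

theorem IsBES.lab_eq_none {ℰ : BES Ev A} (h : IsBES ℰ) {e : Ev} (he : e ∉ ℰ.E) :
    ℰ.lab e = none :=
  not_not.1 (mt h.mem_of_lab_ne_none he)

theorem IsBES.final_subset {ℰ : BES Ev A} (h : IsBES ℰ) : ℰ.final ⊆ ℰ.E :=
  h.2.2.2.2.2.1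

theorem mem_bInit_of_mem_bInit_bseq {ℰ ℱ : BES Ev A} {e : Ev} (he : e ∈ bInit (bseq ℰ ℱ)) :
    e ∈ bInit ℰ := by
  obtain ⟨heE, hnb⟩ := he
  refine ⟨heE.resolve_right fun heF => ?_, fun x hx => hnb x (Or.inl hx)⟩
  exact hnb ℰ.final (Or.inr (Or.inr ⟨rfl, heF, fun x hx => hnb x (Or.inr (Or.inl hx))⟩))

theorem partialCluster_sUnion {ℰ : BES Ev A} {c : Set (Set Ev)}
    (hc : ∀ K ∈ c, PartialCluster ℰ K) (hchain : IsChain (· ⊆ ·) c) :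
    PartialCluster ℰ (⋃₀ c) := by
  have common : ∀ a ∈ ⋃₀ c, ∀ b ∈ ⋃₀ c, ∃ K ∈ c, a ∈ K ∧ b ∈ K := by
    rintro a ⟨K₁, hK₁, ha⟩ b ⟨K₂, hK₂, hb⟩
    rcases hchain.total hK₁ hK₂ with h | h
    exacts [⟨K₂, hK₂, h ha, hb⟩, ⟨K₁, hK₁, ha, h hb⟩]
  refine ⟨Set.sUnion_subset fun K hK => (hc K hK).1, fun a ha b hb => ?_, fun a ha b hb => ?_⟩
  all_goals
    obtain ⟨K, hK, haK, hbK⟩ := common a ha b hb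
  exacts [(hc K hK).2.1 a haK b hbK, (hc K hK).2.2 a haK b hbK]

theorem exists_cluster_mem {ℰ : BES Ev A} {e : Ev} (he : e ∈ ℰ.E) :
    ∃ K, Cluster ℰ K ∧ e ∈ K := by
  have hsingle : PartialCluster ℰ {e} := by
    refine ⟨Set.singleton_subset_iff.2 he, ?_, ?_⟩
    · rintro a rfl b rfl hab
      exact absurd rfl hab
    · rintro a rfl b rfl x hx
      exact hx
  obtain ⟨K, heK, hK⟩ := zorn_subset_nonempty {K | PartialCluster ℰ K}
    (fun c hc hchain _ => ⟨⋃₀ c, partialCluster_sUnion hc hchain,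
      fun _ => Set.subset_sUnion_of_mem⟩) {e} hsingle
  exact ⟨K, ⟨hK.prop, fun H hH hKH => (hK.eq_of_subset hH hKH).symm⟩, heK rfl⟩

theorem cell_subset_E {ℰ : BES Ev A} {e : Ev} (he : e ∈ ℰ.E) : cell ℰ e ⊆ ℰ.E := by
  obtain ⟨K, hK, heK⟩ := exists_cluster_mem he
  have hmem : K ∈ {K | Cluster ℰ K ∧ e ∈ K} := ⟨hK, heK⟩
  exact (Set.sInter_subset_of_mem hmem).trans hK.1.1

theorem IsDistOn.support_subset {ℰ : BES Ev A} {p : PMF Ev} (hp : IsDistOn ℰ p) :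
    p.support ⊆ ℰ.E := by
  obtain ⟨e, he, hsub⟩ := hp
  exact hsub.trans (cell_subset_E he)

theorem IsPBES.support_subset {P : PBES Ev A} (hP : IsPBES P) {p : PMF Ev} (hp : p ∈ P.dists) :
    p.support ⊆ P.bes.E :=
  (hP.2.2.1 p hp).support_subset

theorem _root_.PMF.map_congr {X Y : Type} {p : PMF X} {f g : X → Y}
    (h : ∀ x ∈ p.support, f x = g x) : p.map f = p.map g := by
  ext y
  simp only [PMF.map_apply]
  refine tsum_congr fun x => ?_
  by_cases hx : x ∈ p.support
  · rw [h x hx]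
  · simp [(PMF.apply_eq_zero_iff p x).2 hx]

theorem lift_bind {X Y : Type} {S : X → PMF Y → Prop} {Δ : PMF X} {F : X → PMF Y}
    (h : ∀ x ∈ Δ.support, S x (F x)) : Lift S Δ (Δ.bind F) := by
  let w : PMF ↥Δ.support :=
    ⟨fun i => Δ i, (hasSum_subtype_iff_of_support_subset subset_rfl).2 Δ.2⟩
  have bind_eq : ∀ {Z : Type} (G : X → PMF Z), Δ.bind G = w.bind fun i => G i := by
    intro Z G
    ext z
    simp only [PMF.bind_apply]
    exact (tsum_subtype_eq_of_support_subset (Function.support_mul_subset_left _ _)).symm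
  exact ⟨Δ.support, Δ.support_countable.to_subtype, w, Subtype.val, fun i => F i,
    by rw [← bind_eq, PMF.bind_pure], fun i _ => h i i.2, bind_eq F⟩

theorem lift_pure {X Y : Type} {S : X → PMF Y → Prop} {x : X} {Θ : PMF Y} (h : S x Θ) :
    Lift S (PMF.pure x) Θ := by
  simpa using lift_bind (Δ := PMF.pure x) (F := fun _ => Θ) (by simpa using h)

theorem ProbPrefix.isConfig_of_mem_support {P : PBES Ev A} {x : Set Ev} {Δ : PMF (Set Ev)}
    (h : ProbPrefix P x Δ) {y : Set Ev} (hy : y ∈ Δ.support) : IsConfig P.bes y := by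
  obtain ⟨-, p, -, -, hext, rfl⟩ := h
  obtain ⟨e, he, hy⟩ := (PMF.mem_support_bind_iff _ _ _).1 hy
  rw [PMF.mem_support_pure_iff] at hy
  exact hy ▸ hext e he

theorem traceOrder_of_split (l₁ : List Ev) (a : Ev) (l₂ : List Ev) (b : Ev) (l₃ : List Ev) :
    traceOrder (l₁ ++ a :: l₂ ++ b :: l₃) a b := by
  induction l₂ generalizing l₁ a with
  | nil => exact Relation.ReflTransGen.single ⟨l₁, l₃, by simp⟩
  | cons c l₂ ih =>
    refine Relation.ReflTransGen.head (b := c) ⟨l₁, l₂ ++ b :: l₃, by simp⟩ ?_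
    show traceOrder _ c b
    simpa using ih (l₁ ++ [a]) c

theorem exists_traceOrder_of_traceAdj_filterMap {g : Ev → Option Ev} {α : List Ev}
    {b₁ b₂ : Ev} (h : traceAdj (α.filterMap g) b₁ b₂) :
    ∃ a₁ ∈ α, ∃ a₂ ∈ α, g a₁ = some b₁ ∧ g a₂ = some b₂ ∧ traceOrder α a₁ a₂ := by
  obtain ⟨L, R, hLR⟩ := h
  obtain ⟨l, r, rfl, -, hr⟩ := List.filterMap_eq_append_iff.1 hLR
  obtain ⟨l₁, a₁, r₁, rfl, -, ha₁, hr₁⟩ := List.filterMap_eq_cons_iff.1 hr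
  obtain ⟨l₂, a₂, r₂, rfl, -, ha₂, -⟩ := List.filterMap_eq_cons_iff.1 hr₁
  refine ⟨a₁, by simp, a₂, by simp, ha₁, ha₂, ?_⟩
  simpa using traceOrder_of_split (l ++ l₁) a₁ l₂ a₂ r₂

theorem traceOrder_of_traceOrder_filterMap {g : Ev → Option Ev} {α : List Ev}
    (hinj : ∀ a ∈ α, ∀ a' ∈ α, ∀ b, g a = some b → g a' = some b → a = a')
    {u v b b' : Ev} (hu : u ∈ α) (hv : v ∈ α) (hgu : g u = some b) (hgv : g v = some b')
    (h : traceOrder (α.filterMap g) b b') : traceOrder α u v := by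
  induction h generalizing v with
  | refl => exact hinj u hu v hv b hgu hgv ▸ .refl
  | tail _ hadj ih =>
    obtain ⟨a₁, ha₁, a₂, ha₂, hga₁, hga₂, hord⟩ := exists_traceOrder_of_traceAdj_filterMap hadj
    rw [hinj v hv a₂ ha₂ _ hgv hga₂]
    exact (ih ha₁ hga₁).trans hord

theorem setOf_mem_filterMap (g : Ev → Option Ev) (α : List Ev) :
    {b | b ∈ α.filterMap g} = some ⁻¹' (g '' {a | a ∈ α}) := by
  ext b
  simp

theorem preimage_some_image_union_singleton (g : Ev → Option Ev) (x : Set Ev) (e : Ev) :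
    some ⁻¹' (g '' (x ∪ {e})) = some ⁻¹' (g '' x) ∪ some ⁻¹' {g e} := by
  rw [Set.image_union, Set.image_singleton, Set.preimage_union]

def MustPrecede (ℰ : BES Ev A) (x : Set Ev) (e : Ev) : Prop :=
  ∀ l r, IsTrace ℰ (l ++ e :: r) → ∃ a ∈ l, a ∈ x

theorem MustPrecede.of_bundle {ℰ : BES Ev A} {x : Set Ev} {e : Ev} (h : ℰ.bundle x e) :
    MustPrecede ℰ x e :=
  fun l r hα => (hα l e r rfl).2.1 x h

theorem MustPrecede.mono {ℰ : BES Ev A} {x y : Set Ev} {e : Ev} (h : MustPrecede ℰ x e)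
    (hxy : x ⊆ y) : MustPrecede ℰ y e :=
  fun l r hα => (h l r hα).imp fun _ ⟨hl, hx⟩ => ⟨hl, hxy hx⟩

theorem MustPrecede.trans {ℰ : BES Ev A} {x : Set Ev} {a e : Ev} (hae : MustPrecede ℰ {a} e)
    (hxa : MustPrecede ℰ x a) : MustPrecede ℰ x e := by
  intro l r hα
  obtain ⟨a', hal, rfl⟩ := hae l r hα
  obtain ⟨s, t, rfl⟩ := List.append_of_mem hal
  obtain ⟨b, hbs, hbx⟩ := hxa s (t ++ e :: r) (by simpa using hα)
  exact ⟨b, by simp [hbs], hbx⟩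

/-- Conditions under which `g` maps traces of `ℰ` to traces of `ℱ` (`isTrace_filterMap`). A bundle
of an image event need not come from a bundle of `ℰ`: it only has to be enforced by `ℰ`. -/
structure IsTraceMap (ℰ ℱ : BES Ev A) (g : Ev → Option Ev) : Prop where
  mem_E : ∀ a ∈ ℰ.E, ∀ b, g a = some b → b ∈ ℱ.E
  injective : ∀ a a' b, g a = some b → g a' = some b → a = a'
  conflict : ∀ a a' b b', g a = some b → g a' = some b' → ℱ.conflict b b' → ℰ.conflict a a'
  mustPrecede : ∀ a b x, g a = some b → ℱ.bundle x b → MustPrecede ℰ (g ⁻¹' (some '' x)) a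

namespace IsTraceMap

variable {ℰ ℱ : BES Ev A} {g : Ev → Option Ev}

theorem isTrace_filterMap (hg : IsTraceMap ℰ ℱ g) {α : List Ev} (hα : IsTrace ℰ α) :
    IsTrace ℱ (α.filterMap g) := by
  intro l b r hdec
  obtain ⟨l₀, r', rfl, rfl, hr⟩ := List.filterMap_eq_append_iff.1 hdec
  obtain ⟨m, a, r₀, rfl, hm, ha, -⟩ := List.filterMap_eq_cons_iff.1 hr
  have hl : (l₀ ++ m).filterMap g = l₀.filterMap g := by
    simp [List.filterMap_eq_nil_iff.2 hm]
  have hα' : IsTrace ℰ ((l₀ ++ m) ++ a :: r₀) := by simpa using hα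
  obtain ⟨haE, -, hprev⟩ := hα' (l₀ ++ m) a r₀ rfl
  rw [← hl]
  refine ⟨hg.mem_E a haE b ha, fun x hx => ?_, fun b' hb' => ?_⟩
  · obtain ⟨a', ha'l, b', hb'x, hga'⟩ := hg.mustPrecede a b x ha hx (l₀ ++ m) r₀ hα'
    exact ⟨b', List.mem_filterMap.2 ⟨a', ha'l, hga'.symm⟩, hb'x⟩
  · obtain ⟨a', ha'l, hga'⟩ := List.mem_filterMap.1 hb'
    obtain ⟨hne, hnc⟩ := hprev a' ha'l
    exact ⟨fun h => hne (hg.injective a a' b ha (h ▸ hga')),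
      fun h => hnc (hg.conflict a a' b b' ha hga' h)⟩

theorem isConfig_image (hg : IsTraceMap ℰ ℱ g) {x : Set Ev} (hx : IsConfig ℰ x) :
    IsConfig ℱ (some ⁻¹' (g '' x)) := by
  obtain ⟨α, hα, rfl⟩ := hx
  exact ⟨α.filterMap g, hg.isTrace_filterMap hα, setOf_mem_filterMap g α⟩

theorem configOrder_of_image (hg : IsTraceMap ℰ ℱ g) {x : Set Ev} {u v b b' : Ev}
    (hu : u ∈ x) (hv : v ∈ x) (hgu : g u = some b) (hgv : g v = some b')
    (h : configOrder ℱ (some ⁻¹' (g '' x)) b b') : configOrder ℰ x u v := by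
  rintro α hα rfl
  refine traceOrder_of_traceOrder_filterMap (fun a _ a' _ => hg.injective a a') hu hv hgu hgv ?_
  exact h _ (hg.isTrace_filterMap hα) (setOf_mem_filterMap g α)

theorem subsum_image (hg : IsTraceMap ℰ ℱ g) (hlab : ∀ a b, g a = some b → ℱ.lab b = ℰ.lab a)
    (hfix : ∀ a, ℰ.lab a ≠ none → g a = some a) (x : Set Ev) :
    Subsum ℰ x ℱ (some ⁻¹' (g '' x)) := by
  have hhat : hatSet ℱ (some ⁻¹' (g '' x)) = hatSet ℰ x := by
    ext b
    constructor
    · rintro ⟨⟨a, hax, hab⟩, hb⟩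
      have ha : ℰ.lab a ≠ none := hlab a b hab ▸ hb
      obtain rfl : a = b := Option.some_injective _ ((hfix a ha).symm.trans hab)
      exact ⟨hax, ha⟩
    · rintro ⟨hbx, hb⟩
      exact ⟨⟨b, hbx, hfix b hb⟩, hlab b b (hfix b hb) ▸ hb⟩
  refine ⟨id, hhat ▸ Set.bijOn_id _, fun e he => ?_, fun e e' he he' hord => ?_⟩
  · rw [hhat] at he
    exact (hlab e e (hfix e he.2)).symm
  · rw [hhat] at he he'
    exact hg.configOrder_of_image he.1 he'.1 (hfix e he.2) (hfix e' he'.2) hord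

theorem probPrefix_map {P Q : PBES Ev A} (hg : IsTraceMap P.bes Q.bes g)
    (hdists : ∀ p ∈ P.dists, p.map g = PMF.pure none ∨ ∃ q ∈ Q.dists, p.map g = q.map some)
    {x : Set Ev} {Δ : PMF (Set Ev)} (h : ProbPrefix P x Δ) :
    Relation.ReflTransGen (Lift (ProbPrefix Q)) (PMF.pure (some ⁻¹' (g '' x)))
      (Δ.map fun y => some ⁻¹' (g '' y)) := by
  obtain ⟨hx, p, hp, hdisj, hext, rfl⟩ := h
  set m : Set Ev → Set Ev := fun y => some ⁻¹' (g '' y)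
  have hmap : (p.bind fun e => PMF.pure (x ∪ {e})).map m
      = (p.map g).map fun o => m x ∪ some ⁻¹' {o} := by
    simp only [PMF.map_bind, PMF.pure_map, PMF.map_comp, m,
      preimage_some_image_union_singleton]
    rfl
  rw [hmap]
  rcases hdists p hp with hnone | ⟨q, hq, hpq⟩
  · have hempty : some ⁻¹' ({none} : Set (Option Ev)) = ∅ := by ext; simp
    rw [hnone, PMF.pure_map, hempty, Set.union_empty]
  have hsome : ∀ b : Ev, some ⁻¹' {some b} = {b} := fun b => by ext; simp
  have hpre : ∀ b ∈ q.support, ∃ e ∈ p.support, g e = some b := by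
    intro b hb
    have hsb : some b ∈ (p.map g).support := by
      rw [hpq, PMF.support_map]
      exact ⟨b, hb, rfl⟩
    exact (PMF.mem_support_map_iff _ _ _).1 hsb
  refine .single (lift_pure ⟨hg.isConfig_image hx, q, hq, ?_, fun b hb => ?_, ?_⟩)
  · refine Set.eq_empty_iff_forall_notMem.2 fun b ⟨hb, a, hax, hab⟩ => ?_
    obtain ⟨e, he, heb⟩ := hpre b hb
    obtain rfl := hg.injective a e b hab heb
    exact Set.eq_empty_iff_forall_notMem.1 hdisj a ⟨he, hax⟩
  · obtain ⟨e, he, heb⟩ := hpre b hb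
    have hcfg := hg.isConfig_image (hext e he)
    rwa [preimage_some_image_union_singleton, heb, hsome] at hcfg
  · rw [hpq, PMF.map_comp, ← PMF.bind_pure_comp]
    simp only [Function.comp_def, hsome, m]

theorem sim {P Q : PBES Ev A} (hg : IsTraceMap P.bes Q.bes g)
    (hlab : ∀ a b, g a = some b → Q.bes.lab b = P.bes.lab a)
    (hfix : ∀ a, P.bes.lab a ≠ none → g a = some a)
    (hdists : ∀ p ∈ P.dists, p.map g = PMF.pure none ∨ ∃ q ∈ Q.dists, p.map g = q.map some)
    (hfinal : ∀ a ∈ P.bes.final, ∃ b ∈ Q.bes.final, g a = some b) :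
    Sim P Q := by
  refine ⟨fun x Θ => IsConfig P.bes x ∧ Θ = PMF.pure (some ⁻¹' (g '' x)),
    ⟨isConfig_empty _, by simp⟩, ?_, ?_, ?_⟩
  · rintro x _ ⟨hx, rfl⟩
    refine ⟨hx, fun y hy => ?_⟩
    obtain rfl := (PMF.mem_support_pure_iff _ _).1 hy
    exact ⟨hg.isConfig_image hx, hg.subsum_image hlab hfix x⟩
  · rintro x _ Δ ⟨-, rfl⟩ hΔ
    refine ⟨_, hg.probPrefix_map hdists hΔ, ?_⟩
    rw [← PMF.bind_pure_comp]
    exact lift_bind fun y hy => ⟨hΔ.isConfig_of_mem_support hy, rfl⟩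
  · rintro x _ ⟨-, rfl⟩ ⟨a, hax, haf⟩ y hy
    obtain rfl := (PMF.mem_support_pure_iff _ _).1 hy
    obtain ⟨b, hbf, hab⟩ := hfinal a haf
    exact ⟨b, ⟨a, hax, hab⟩, hbf⟩

end IsTraceMap

structure InterchangeSetup (Ev A : Type) where
  P : PBES Ev A
  Q : PBES Ev A
  P' : PBES Ev A
  Q' : PBES Ev A
  d₁ : Ev
  d₂ : Ev
  d₃ : Ev
  d₄ : Ev
  d₅ : Ev
  d₆ : Ev
  hP : IsPBES P
  hQ : IsPBES Q
  hP' : IsPBES P'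
  hQ' : IsPBES Q'
  nodup : List.Nodup [d₁, d₂, d₃, d₄, d₅, d₆]
  fresh : ∀ d ∈ [d₁, d₂, d₃, d₄, d₅, d₆], d ∉ P.bes.E ∪ Q.bes.E ∪ P'.bes.E ∪ Q'.bes.E

namespace InterchangeSetup

variable (S : InterchangeSetup Ev A)

def core : Set Ev := S.P.bes.E ∪ S.Q.bes.E ∪ S.P'.bes.E ∪ S.Q'.bes.E

noncomputable def lhs : PBES Ev A := pseq (ppar S.P S.Q S.d₁ S.d₂) (ppar S.P' S.Q' S.d₃ S.d₄)

noncomputable def rhs : PBES Ev A := ppar (pseq S.P S.P') (pseq S.Q S.Q') S.d₅ S.d₆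

/-- Erases the inner delimiters `d₂, d₃` and renames the outer ones, `d₁ ↦ d₅`, `d₄ ↦ d₆`. -/
noncomputable def eventMap (e : Ev) : Option Ev :=
  if e ∈ S.core then some e
  else if e = S.d₁ then some S.d₅
  else if e = S.d₄ then some S.d₆
  else none

theorem subset_core_P : S.P.bes.E ⊆ S.core := fun _ h => by simp [core, h]

theorem subset_core_Q : S.Q.bes.E ⊆ S.core := fun _ h => by simp [core, h]

theorem subset_core_P' : S.P'.bes.E ⊆ S.core := fun _ h => by simp [core, h]

theorem subset_core_Q' : S.Q'.bes.E ⊆ S.core := fun _ h => by simp [core, h]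

theorem notMem_core {d : Ev} (hd : d ∈ [S.d₁, S.d₂, S.d₃, S.d₄, S.d₅, S.d₆]) : d ∉ S.core :=
  S.fresh d hd

theorem delimiters_ne : S.d₁ ≠ S.d₄ ∧ S.d₂ ≠ S.d₁ ∧ S.d₂ ≠ S.d₄ ∧ S.d₃ ≠ S.d₁ ∧
    S.d₃ ≠ S.d₄ ∧ S.d₅ ≠ S.d₆ := by
  have h := S.nodup
  simp only [List.nodup_cons, List.mem_cons, List.not_mem_nil, List.nodup_nil] at h
  tauto

theorem eventMap_of_mem_core {e : Ev} (he : e ∈ S.core) : S.eventMap e = some e :=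
  if_pos he

theorem eventMap_d₁ : S.eventMap S.d₁ = some S.d₅ := by
  simp [eventMap, S.notMem_core (d := S.d₁) (by simp)]

theorem eventMap_d₄ : S.eventMap S.d₄ = some S.d₆ := by
  simp [eventMap, S.notMem_core (d := S.d₄) (by simp), S.delimiters_ne.1.symm]

theorem eventMap_d₂ : S.eventMap S.d₂ = none := by
  obtain ⟨-, h₂₁, h₂₄, -⟩ := S.delimiters_ne
  simp [eventMap, S.notMem_core (d := S.d₂) (by simp), h₂₁, h₂₄]

theorem eventMap_d₃ : S.eventMap S.d₃ = none := by
  obtain ⟨-, -, -, h₃₁, h₃₄, -⟩ := S.delimiters_ne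
  simp [eventMap, S.notMem_core (d := S.d₃) (by simp), h₃₁, h₃₄]

theorem eventMap_eq_some_iff {a b : Ev} : S.eventMap a = some b ↔
    (a ∈ S.core ∧ b = a) ∨ (a = S.d₁ ∧ b = S.d₅) ∨ (a = S.d₄ ∧ b = S.d₆) := by
  have h₁ := S.notMem_core (d := S.d₁) (by simp)
  have h₄ := S.notMem_core (d := S.d₄) (by simp)
  have h₁₄ := S.delimiters_ne.1
  unfold eventMap
  split_ifs <;> aesop

theorem eq_of_eventMap_eq_some {a b : Ev} (h : S.eventMap a = some b) (hb : b ∈ S.core) :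
    a = b := by
  rcases S.eventMap_eq_some_iff.1 h with ⟨-, rfl⟩ | ⟨-, rfl⟩ | ⟨-, rfl⟩
  · rfl
  · exact absurd hb (S.notMem_core (by simp))
  · exact absurd hb (S.notMem_core (by simp))

theorem eq_d₄_of_eventMap_eq_some_d₆ {a : Ev} (h : S.eventMap a = some S.d₆) : a = S.d₄ := by
  obtain ⟨-, -, -, -, -, h₅₆⟩ := S.delimiters_ne
  rcases S.eventMap_eq_some_iff.1 h with ⟨ha, rfl⟩ | ⟨-, h₆₅⟩ | ⟨rfl, -⟩
  · exact absurd ha (S.notMem_core (by simp))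
  · exact absurd h₆₅.symm h₅₆
  · rfl

theorem mem_core_of_rhs_conflict {u v : Ev} (h : S.rhs.bes.conflict u v) :
    u ∈ S.core ∧ v ∈ S.core := by
  rcases h with (h | h) | (h | h)
  · exact (S.hP.1.mem_of_conflict h).imp (S.subset_core_P ·) (S.subset_core_P ·)
  · exact (S.hP'.1.mem_of_conflict h).imp (S.subset_core_P' ·) (S.subset_core_P' ·)
  · exact (S.hQ.1.mem_of_conflict h).imp (S.subset_core_Q ·) (S.subset_core_Q ·)
  · exact (S.hQ'.1.mem_of_conflict h).imp (S.subset_core_Q' ·) (S.subset_core_Q' ·)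

theorem rhs_conflict_iff {u v : Ev} : S.rhs.bes.conflict u v ↔ S.lhs.bes.conflict u v := by
  simp only [lhs, rhs, pseq, ppar, bseq, bpar]
  tauto

theorem mustPrecede_of_lhs_bundle {x : Set Ev} {a : Ev} (h : S.lhs.bes.bundle x a)
    (hx : x ⊆ S.core) : MustPrecede S.lhs.bes (S.eventMap ⁻¹' (some '' x)) a :=
  (MustPrecede.of_bundle h).mono fun c hc => ⟨c, hc, (S.eventMap_of_mem_core (hx hc)).symm⟩

theorem mustPrecede_of_component_bundle {R : PBES Ev A} (hR : IsPBES R)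
    (hRc : R.bes.E ⊆ S.core) {a b : Ev} {x : Set Ev} (hab : S.eventMap a = some b)
    (h : R.bes.bundle x b) (hl : S.lhs.bes.bundle x b) :
    MustPrecede S.lhs.bes (S.eventMap ⁻¹' (some '' x)) a := by
  obtain rfl := S.eq_of_eventMap_eq_some hab (hRc (hR.1.mem_of_bundle h))
  exact S.mustPrecede_of_lhs_bundle hl ((hR.1.bundle_subset h).trans hRc)

theorem d₃_mem_bInit : S.d₃ ∈ bInit (bpar S.P'.bes S.Q'.bes S.d₃ S.d₄) := by
  have h₃ := S.notMem_core (d := S.d₃) (by simp)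
  obtain ⟨-, -, -, -, h₃₄, -⟩ := S.delimiters_ne
  refine ⟨by simp [bpar], fun x hx => ?_⟩
  rcases hx with h | h | ⟨-, h | h⟩ | ⟨-, h⟩ | ⟨-, h⟩
  · exact h₃ (S.subset_core_P' (S.hP'.1.mem_of_bundle h))
  · exact h₃ (S.subset_core_Q' (S.hQ'.1.mem_of_bundle h))
  · exact h₃ (S.subset_core_P' h.1)
  · exact h₃ (S.subset_core_Q' h.1)
  · exact h₃₄ h
  · exact h₃₄ h

/-- An initial event of `P'` or `Q'` waits for `d₃`, which waits for `d₂`, which waits for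
`P` and `Q` to finish. -/
theorem mustPrecede_of_mem_bInit {x : Set Ev} {b : Ev}
    (hb : b ∈ bInit S.P'.bes ∨ b ∈ bInit S.Q'.bes) (hx : S.lhs.bes.bundle x S.d₂)
    (hxc : x ⊆ S.core) : MustPrecede S.lhs.bes (S.eventMap ⁻¹' (some '' x)) b :=
  (MustPrecede.of_bundle (x := {S.d₃}) (Or.inr (Or.inl (Or.inr (Or.inr (Or.inl ⟨rfl, hb⟩)))))).trans
    ((MustPrecede.of_bundle (Or.inr (Or.inr ⟨rfl, S.d₃_mem_bInit⟩))).trans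
      (S.mustPrecede_of_lhs_bundle hx hxc))

theorem mustPrecede_preimage {a b : Ev} {x : Set Ev} (hab : S.eventMap a = some b)
    (hx : S.rhs.bes.bundle x b) : MustPrecede S.lhs.bes (S.eventMap ⁻¹' (some '' x)) a := by
  have hcore : b ∈ S.core → a = b := S.eq_of_eventMap_eq_some hab
  rcases hx with (h | h | ⟨rfl, hb⟩) | (h | h | ⟨rfl, hb⟩) | ⟨rfl, hb | hb⟩ | ⟨rfl, rfl⟩ |
    ⟨rfl, rfl⟩
  · exact S.mustPrecede_of_component_bundle S.hP S.subset_core_P hab h (Or.inl (Or.inl h))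
  · exact S.mustPrecede_of_component_bundle S.hP' S.subset_core_P' hab h
      (Or.inr (Or.inl (Or.inl h)))
  · obtain rfl := hcore (S.subset_core_P' hb.1)
    exact S.mustPrecede_of_mem_bInit (Or.inl hb)
      (Or.inl (Or.inr (Or.inr (Or.inr (Or.inl ⟨rfl, rfl⟩)))))
      (S.hP.1.final_subset.trans S.subset_core_P)
  · exact S.mustPrecede_of_component_bundle S.hQ S.subset_core_Q hab h
      (Or.inl (Or.inr (Or.inl h)))
  · exact S.mustPrecede_of_component_bundle S.hQ' S.subset_core_Q' hab h
      (Or.inr (Or.inl (Or.inr (Or.inl h))))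
  · obtain rfl := hcore (S.subset_core_Q' hb.1)
    exact S.mustPrecede_of_mem_bInit (Or.inr hb)
      (Or.inl (Or.inr (Or.inr (Or.inr (Or.inr ⟨rfl, rfl⟩)))))
      (S.hQ.1.final_subset.trans S.subset_core_Q)
  · have hb' := mem_bInit_of_mem_bInit_bseq hb
    obtain rfl := hcore (S.subset_core_P hb'.1)
    exact (MustPrecede.of_bundle (Or.inl (Or.inr (Or.inr (Or.inl ⟨rfl, Or.inl hb'⟩))))).mono
      (by rintro _ rfl; exact ⟨S.d₅, rfl, S.eventMap_d₁.symm⟩)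
  · have hb' := mem_bInit_of_mem_bInit_bseq hb
    obtain rfl := hcore (S.subset_core_Q hb'.1)
    exact (MustPrecede.of_bundle (Or.inl (Or.inr (Or.inr (Or.inl ⟨rfl, Or.inr hb'⟩))))).mono
      (by rintro _ rfl; exact ⟨S.d₅, rfl, S.eventMap_d₁.symm⟩)
  · obtain rfl := S.eq_d₄_of_eventMap_eq_some_d₆ hab
    exact S.mustPrecede_of_lhs_bundle
      (Or.inr (Or.inl (Or.inr (Or.inr (Or.inr (Or.inl ⟨rfl, rfl⟩))))))
      (S.hP'.1.final_subset.trans S.subset_core_P')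
  · obtain rfl := S.eq_d₄_of_eventMap_eq_some_d₆ hab
    exact S.mustPrecede_of_lhs_bundle
      (Or.inr (Or.inl (Or.inr (Or.inr (Or.inr (Or.inr ⟨rfl, rfl⟩))))))
      (S.hQ'.1.final_subset.trans S.subset_core_Q')

theorem isTraceMap : IsTraceMap S.lhs.bes S.rhs.bes S.eventMap where
  mem_E a _ b hab := by
    rcases S.eventMap_eq_some_iff.1 hab with ⟨ha, rfl⟩ | ⟨-, rfl⟩ | ⟨-, rfl⟩
    · simp only [core, Set.mem_union] at ha
      simp only [rhs, ppar, pseq, bpar, bseq, Set.mem_union]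
      tauto
    all_goals simp [rhs, ppar, bpar]
  injective a a' b hab hab' := by
    have h₅ := S.notMem_core (d := S.d₅) (by simp)
    have h₆ := S.notMem_core (d := S.d₆) (by simp)
    obtain ⟨-, -, -, -, -, h₅₆⟩ := S.delimiters_ne
    rcases S.eventMap_eq_some_iff.1 hab with ⟨ha, rfl⟩ | ⟨rfl, rfl⟩ | ⟨rfl, rfl⟩ <;>
      rcases S.eventMap_eq_some_iff.1 hab' with ⟨ha', h⟩ | ⟨rfl, h⟩ | ⟨rfl, h⟩ <;>
      simp_all
  conflict a a' b b' hab hab' hc := by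
    obtain ⟨hb, hb'⟩ := S.mem_core_of_rhs_conflict hc
    obtain rfl := S.eq_of_eventMap_eq_some hab hb
    obtain rfl := S.eq_of_eventMap_eq_some hab' hb'
    exact S.rhs_conflict_iff.1 hc
  mustPrecede _ _ _ hab hx := S.mustPrecede_preimage hab hx

theorem lhs_lab_eq_none {e : Ev} (he : e ∉ S.core) : S.lhs.bes.lab e = none := by
  have hP := S.hP.1.lab_eq_none fun h => he (S.subset_core_P h)
  have hQ := S.hQ.1.lab_eq_none fun h => he (S.subset_core_Q h)
  have hP' := S.hP'.1.lab_eq_none fun h => he (S.subset_core_P' h)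
  have hQ' := S.hQ'.1.lab_eq_none fun h => he (S.subset_core_Q' h)
  simp [lhs, pseq, ppar, bseq, bpar, hP, hQ, hP', hQ']

theorem rhs_lab (h : S.Q.bes.E ∩ S.P'.bes.E = ∅) : S.rhs.bes.lab = S.lhs.bes.lab := by
  funext e
  have hQP' : S.Q.bes.lab e = none ∨ S.P'.bes.lab e = none := by
    by_cases he : e ∈ S.Q.bes.E
    · exact Or.inr (S.hP'.1.lab_eq_none fun he' => h.subset ⟨he, he'⟩)
    · exact Or.inl (S.hQ.1.lab_eq_none he)
  simp only [lhs, rhs, pseq, ppar, bseq, bpar, Option.orElse_eq_or, Option.or_assoc]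
  rcases hQP' with h | h <;> simp [h]

theorem eventMap_of_lab_ne_none {a : Ev} (ha : S.lhs.bes.lab a ≠ none) :
    S.eventMap a = some a :=
  S.eventMap_of_mem_core (by by_contra h; exact ha (S.lhs_lab_eq_none h))

theorem rhs_lab_eventMap (h : S.Q.bes.E ∩ S.P'.bes.E = ∅) {a b : Ev}
    (hab : S.eventMap a = some b) : S.rhs.bes.lab b = S.lhs.bes.lab a := by
  rw [S.rhs_lab h]
  rcases S.eventMap_eq_some_iff.1 hab with ⟨-, rfl⟩ | ⟨rfl, rfl⟩ | ⟨rfl, rfl⟩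
  · rfl
  all_goals rw [S.lhs_lab_eq_none (S.notMem_core (by simp)),
    S.lhs_lab_eq_none (S.notMem_core (by simp))]

theorem map_eventMap {p : PMF Ev} (hp : p.support ⊆ S.core) : p.map S.eventMap = p.map some :=
  PMF.map_congr fun _ he => S.eventMap_of_mem_core (hp he)

theorem map_eventMap_of_mem_dists {p : PMF Ev} (hp : p ∈ S.lhs.dists) :
    p.map S.eventMap = PMF.pure none ∨ ∃ q ∈ S.rhs.dists, p.map S.eventMap = q.map some := by
  have hcomp : ∀ {R : PBES Ev A}, IsPBES R → R.bes.E ⊆ S.core → p ∈ R.dists →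
      p.map S.eventMap = p.map some :=
    fun hR hRc hpR => S.map_eventMap ((hR.support_subset hpR).trans hRc)
  rcases hp with ((hp | hp) | rfl | rfl) | ((hp | hp) | rfl | rfl)
  · exact Or.inr ⟨p, Or.inl (Or.inl (Or.inl hp)), hcomp S.hP S.subset_core_P hp⟩
  · exact Or.inr ⟨p, Or.inl (Or.inr (Or.inl hp)), hcomp S.hQ S.subset_core_Q hp⟩
  · exact Or.inr ⟨PMF.pure S.d₅, Or.inr (Or.inl rfl),
      by rw [PMF.pure_map, PMF.pure_map, S.eventMap_d₁]⟩
  · exact Or.inl (by rw [PMF.pure_map, S.eventMap_d₂])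
  · exact Or.inr ⟨p, Or.inl (Or.inl (Or.inr hp)), hcomp S.hP' S.subset_core_P' hp⟩
  · exact Or.inr ⟨p, Or.inl (Or.inr (Or.inr hp)), hcomp S.hQ' S.subset_core_Q' hp⟩
  · exact Or.inl (by rw [PMF.pure_map, S.eventMap_d₃])
  · exact Or.inr ⟨PMF.pure S.d₆, Or.inr (Or.inr rfl),
      by rw [PMF.pure_map, PMF.pure_map, S.eventMap_d₄]⟩

theorem sim (h : S.Q.bes.E ∩ S.P'.bes.E = ∅) : Sim S.lhs S.rhs :=
  S.isTraceMap.sim (fun _ _ => S.rhs_lab_eventMap h) (fun _ => S.eventMap_of_lab_ne_none)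
    (fun _ => S.map_eventMap_of_mem_dists) (fun _ ha => ⟨S.d₆, rfl, ha ▸ S.eventMap_d₄⟩)

end InterchangeSetup

theorem interchange_law_general {Ev A : Type} (P Q P' Q' : PBES Ev A)
    (hP : IsPBES P) (hQ : IsPBES Q) (hP' : IsPBES P') (hQ' : IsPBES Q')
    (h₄ : Q.bes.E ∩ P'.bes.E = ∅)
    (d₁ d₂ d₃ d₄ d₅ d₆ : Ev)
    (hnodup : List.Nodup [d₁, d₂, d₃, d₄, d₅, d₆])
    (hfresh : ∀ d ∈ [d₁, d₂, d₃, d₄, d₅, d₆],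
      d ∉ P.bes.E ∪ Q.bes.E ∪ P'.bes.E ∪ Q'.bes.E) :
    Sim (pseq (ppar P Q d₁ d₂) (ppar P' Q' d₃ d₄))
        (ppar (pseq P P') (pseq Q Q') d₅ d₆) :=
  (InterchangeSetup.mk P Q P' Q' d₁ d₂ d₃ d₄ d₅ d₆ hP hQ hP' hQ' hnodup hfresh).sim h₄

/-- The interchange law modulo probabilistic simulation:
`(P ‖ Q) · (P' ‖ Q') ⊑ (P · P') ‖ (Q · Q')`. -/
theorem interchange_law {Ev A : Type} (P Q P' Q' : PBES Ev A)
    (hP : IsPBES P) (hQ : IsPBES Q) (hP' : IsPBES P') (hQ' : IsPBES Q')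
    (hrP : Regular P.bes) (hrQ : Regular Q.bes)
    (hrP' : Regular P'.bes) (hrQ' : Regular Q'.bes)
    (h₁ : P.bes.E ∩ Q.bes.E = ∅) (h₂ : P.bes.E ∩ P'.bes.E = ∅)
    (h₃ : P.bes.E ∩ Q'.bes.E = ∅) (h₄ : Q.bes.E ∩ P'.bes.E = ∅)
    (h₅ : Q.bes.E ∩ Q'.bes.E = ∅) (h₆ : P'.bes.E ∩ Q'.bes.E = ∅)
    (d₁ d₂ d₃ d₄ d₅ d₆ : Ev)
    (hnodup : List.Nodup [d₁, d₂, d₃, d₄, d₅, d₆])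
    (hfresh : ∀ d ∈ [d₁, d₂, d₃, d₄, d₅, d₆],
      d ∉ P.bes.E ∪ Q.bes.E ∪ P'.bes.E ∪ Q'.bes.E) :
    Sim (pseq (ppar P Q d₁ d₂) (ppar P' Q' d₃ d₄))
        (ppar (pseq P P') (pseq Q Q') d₅ d₆) :=
  interchange_law_general P Q P' Q' hP hQ hP' hQ' h₄ d₁ d₂ d₃ d₄ d₅ d₆ hnodup hfresh

end PCKA
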